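/- For every k ≥ −1 and every object (i₁, i₂, γ) of the comma category [k] ↓ σ_a, the comma category J ↓ (i₁, i₂, γ) has exactly one object, where J: {−1, 0, …, k} → ([k] ↓ σ_a) is the functor j ↦ (([j], [k−j−1]), id_{[k]}). Concretely: there exists a unique −1 ≤ j ≤ k and a unique pair of morphisms (α₁: [j] → [i₁], α₂: [k−j−1] → [i₂]) in Δ_a × Δ_a with σ_a(α₁, α₂) = γ. -/

import Mathlib

open CategoryTheory CategoryTheory.Limits Simplicial Opposite

universe v u

namespace OrdSum

/-- The "ordinal sum" of two monotone maps between finite linear orders. -/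
def ordJoin {m n m' n' : ℕ} (f : Fin m →o Fin m') (g : Fin n →o Fin n') :
    Fin (m + n) →o Fin (m' + n') where
  toFun i :=
    if h : (i : ℕ) < m then Fin.castAdd n' (f ⟨i, h⟩)
    else Fin.natAdd m' (g ⟨(i : ℕ) - m, by omega⟩)
  monotone' := by
    intro i j hij
    have hij' : (i : ℕ) ≤ (j : ℕ) := hij
    dsimp only
    by_cases hi : (i : ℕ) < m <;> by_cases hj : (j : ℕ) < m
    · simp only [dif_pos hi, dif_pos hj, Fin.le_def, Fin.coe_castAdd]
      exact f.monotone (show (⟨(i:ℕ), hi⟩ : Fin m) ≤ ⟨(j:ℕ), hj⟩ from hij')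
    · simp only [dif_pos hi, dif_neg hj, Fin.le_def, Fin.coe_castAdd, Fin.coe_natAdd]
      have := (f ⟨(i:ℕ), hi⟩).isLt
      omega
    · omega
    · simp only [dif_neg hi, dif_neg hj, Fin.le_def, Fin.coe_natAdd]
      have : (⟨(i:ℕ) - m, by omega⟩ : Fin n) ≤ ⟨(j:ℕ) - m, by omega⟩ := by
        simp only [Fin.mk_le_mk]; omega
      have := g.monotone this
      omega

theorem ordJoin_id (m n : ℕ) :
    ordJoin (OrderHom.id (α := Fin m)) (OrderHom.id (α := Fin n)) = OrderHom.id := by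
  ext i
  simp only [ordJoin, OrderHom.coe_mk, OrderHom.id_coe, id_eq]
  by_cases h : (i : ℕ) < m
  · simp [dif_pos h]
  · simp only [dif_neg h, Fin.coe_natAdd]
    omega

theorem ordJoin_comp {m n m' n' m'' n'' : ℕ}
    (f : Fin m →o Fin m') (g : Fin n →o Fin n')
    (f' : Fin m' →o Fin m'') (g' : Fin n' →o Fin n'') :
    ordJoin (f'.comp f) (g'.comp g) = (ordJoin f' g').comp (ordJoin f g) := by
  ext i
  change ((if h : (i : ℕ) < m then Fin.castAdd n'' (f' (f ⟨i, h⟩))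
      else Fin.natAdd m'' (g' (g ⟨(i : ℕ) - m, by omega⟩)) : Fin _) : ℕ) =
    ((ordJoin f' g') (if h : (i : ℕ) < m then Fin.castAdd n' (f ⟨i, h⟩)
      else Fin.natAdd m' (g ⟨(i : ℕ) - m, by omega⟩)) : ℕ)
  by_cases h : (i : ℕ) < m
  · have h1 : ((Fin.castAdd n' (f ⟨(i:ℕ), h⟩)) : ℕ) < m' := (f ⟨(i:ℕ), h⟩).isLt
    rw [dif_pos h, dif_pos h]
    change _ = ((if h : _ then _ else _ : Fin _) : ℕ)
    rw [dif_pos h1]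
    rfl
  · have h1 : ¬ ((Fin.natAdd m' (g ⟨(i:ℕ) - m, by omega⟩)) : ℕ) < m' := by
      simp only [Fin.coe_natAdd]; omega
    rw [dif_neg h, dif_neg h]
    change _ = ((if h : _ then _ else _ : Fin _) : ℕ)
    rw [dif_neg h1]
    simp only [Fin.coe_natAdd, Nat.add_right_cancel_iff]
    congr 2
    apply Fin.ext
    simp

/-- The ordinal sum functor `σ : Δ × Δ → Δ`, `([k],[l]) ↦ [k+1+l]`. -/
def ordSum : SimplexCategory × SimplexCategory ⥤ SimplexCategory where
  obj x := SimplexCategory.mk (x.1.len + 1 + x.2.len)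
  map {x y} f := SimplexCategory.Hom.mk
    (ordJoin (m := x.1.len + 1) (n := x.2.len + 1) (m' := y.1.len + 1) (n' := y.2.len + 1)
      f.1.toOrderHom f.2.toOrderHom)
  map_id x := by
    apply SimplexCategory.Hom.ext
    simp only [SimplexCategory.Hom.toOrderHom_mk]
    exact ordJoin_id _ _
  map_comp {x y z} f g := by
    apply SimplexCategory.Hom.ext
    simp only [SimplexCategory.Hom.toOrderHom_mk]
    exact ordJoin_comp _ _ _ _

/-- The augmented simplex category `Δₐ`: the object `⟨n⟩` is the linear order with `n`
elements (so `⟨0⟩` is `[-1] = ∅` and `⟨n+1⟩` is `[n]`); morphisms are monotone maps. -/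
@[ext] structure AugSimplex where
  len : ℕ

instance : Category.{0} AugSimplex where
  Hom a b := Fin a.len →o Fin b.len
  id _ := OrderHom.id
  comp f g := g.comp f

/-- The inclusion `ι : Δ → Δₐ`. -/
def incl : SimplexCategory ⥤ AugSimplex where
  obj x := ⟨x.len + 1⟩
  map f := f.toOrderHom
  map_id _ := rfl
  map_comp _ _ := rfl

/-- The ordinal sum functor `σₐ : Δₐ × Δₐ → Δₐ`. -/
def ordSumAug : AugSimplex × AugSimplex ⥤ AugSimplex where
  obj x := ⟨x.1.len + x.2.len⟩
  map f := ordJoin f.1 f.2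
  map_id _ := ordJoin_id _ _
  map_comp _ _ := ordJoin_comp _ _ _ _

variable {C : Type u} [Category.{v} C]

variable (C) in
/-- Total décalage `σ* : Fun(Δᵒᵖ, C) ⥤ Fun((Δ×Δ)ᵒᵖ, C)`, precomposition with ordinal sum. -/
def decF : (SimplexCategoryᵒᵖ ⥤ C) ⥤ ((SimplexCategory × SimplexCategory)ᵒᵖ ⥤ C) :=
  (Functor.whiskeringLeft _ _ C).obj ordSum.op

variable (C) in
/-- The functor sending a bisimplicial object `Y` to `[k] ↦ Y_{k,−}`. -/
def rowsF : ((SimplexCategory × SimplexCategory)ᵒᵖ ⥤ C) ⥤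
    (SimplexCategoryᵒᵖ ⥤ (SimplexCategoryᵒᵖ ⥤ C)) :=
  (Functor.whiskeringLeft _ _ C).obj
    (prodOpEquiv (C := SimplexCategory) (D := SimplexCategory)).inverse ⋙ Functor.curry

variable (C) in
/-- The functor sending a bisimplicial object `Y` to `[k] ↦ Y_{−,k}`. -/
def colsF : ((SimplexCategory × SimplexCategory)ᵒᵖ ⥤ C) ⥤
    (SimplexCategoryᵒᵖ ⥤ (SimplexCategoryᵒᵖ ⥤ C)) :=
  (Functor.whiskeringLeft _ _ C).obj
    (CategoryTheory.Prod.swap SimplexCategoryᵒᵖ SimplexCategoryᵒᵖ ⋙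
      (prodOpEquiv (C := SimplexCategory) (D := SimplexCategory)).inverse) ⋙ Functor.curry

/-- The simplicial object `Y_{k,−}`. -/
def rowS (Y : (SimplexCategory × SimplexCategory)ᵒᵖ ⥤ C) (k : SimplexCategory) :
    SimplexCategoryᵒᵖ ⥤ C :=
  ((rowsF C).obj Y).obj (op k)

/-- The simplicial object `Y_{−,k}`. -/
def colS (Y : (SimplexCategory × SimplexCategory)ᵒᵖ ⥤ C) (k : SimplexCategory) :
    SimplexCategoryᵒᵖ ⥤ C :=
  ((colsF C).obj Y).obj (op k)

/-- `π₀` of a simplicial object: the coequalizer of the two face maps `X₁ ⇉ X₀`. -/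
noncomputable def pi0F [HasCoequalizers C] : (SimplexCategoryᵒᵖ ⥤ C) ⥤ C where
  obj X := coequalizer (X.map (SimplexCategory.δ (1 : Fin 2)).op)
    (X.map (SimplexCategory.δ (0 : Fin 2)).op)
  map {X Y} f := coequalizer.desc (f.app (op ⦋0⦌) ≫ coequalizer.π _ _) (by
    rw [← Category.assoc, ← Category.assoc, f.naturality, f.naturality,
      Category.assoc, Category.assoc, coequalizer.condition])
  map_id X := by
    apply coequalizer.hom_ext
    simp
  map_comp f g := by
    apply coequalizer.hom_ext
    simp

/-- The canonical quotient map `X₀ → π₀(X)`. -/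
noncomputable def pi0π [HasCoequalizers C] (X : SimplexCategoryᵒᵖ ⥤ C) :
    X.obj (op ⦋0⦌) ⟶ pi0F.obj X :=
  coequalizer.π _ _

variable (C) in
/-- `Y ↦ ([k] ↦ π₀(Y_{k,−}))`. -/
noncomputable def rowsPi0F [HasCoequalizers C] :
    ((SimplexCategory × SimplexCategory)ᵒᵖ ⥤ C) ⥤ (SimplexCategoryᵒᵖ ⥤ C) :=
  rowsF C ⋙ (Functor.whiskeringRight _ _ _).obj pi0F

variable (C) in
/-- `Y ↦ ([k] ↦ π₀(Y_{−,k}))`. -/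
noncomputable def colsPi0F [HasCoequalizers C] :
    ((SimplexCategory × SimplexCategory)ᵒᵖ ⥤ C) ⥤ (SimplexCategoryᵒᵖ ⥤ C) :=
  colsF C ⋙ (Functor.whiskeringRight _ _ _).obj pi0F

variable (C) in
/-- The levelwise tensor `X ⊗ K` of a simplicial object with a simplicial set,
`(X ⊗ K)ₖ = ∐_{Kₖ} Xₖ`, as a functor in `X`. -/
noncomputable def tensorF [HasColimits C] (K : SSet.{v}) :
    (SimplexCategoryᵒᵖ ⥤ C) ⥤ (SimplexCategoryᵒᵖ ⥤ C) where
  obj X :=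
    { obj := fun n => ∐ (fun (_ : K.obj n) => X.obj n)
      map := fun {n m} f => Sigma.desc
        (fun s => X.map f ≫ Sigma.ι (fun (_ : K.obj m) => X.obj m) (K.map f s))
      map_id := fun n => by
        apply Sigma.hom_ext
        intro s
        simp [FunctorToTypes.map_id_apply]
      map_comp := fun {n m l} f g => by
        apply Sigma.hom_ext
        intro s
        simp [FunctorToTypes.map_comp_apply] }
  map {X Y} f :=
    { app := fun n => Limits.Sigma.desc
        (fun (s : K.obj n) => f.app n ≫ Sigma.ι (fun (_ : K.obj n) => Y.obj n) s)
      naturality := fun {n m} g => by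
        apply Sigma.hom_ext
        intro s
        simp }
  map_id X := by
    ext n : 1
    apply Sigma.hom_ext
    intro s
    simp
  map_comp f g := by
    ext n : 1
    apply Sigma.hom_ext
    intro s
    simp

variable (C) in
/-- The canonical projection `X ⊗ K ⟶ X`, induced by `K ⟶ Δ[0]`. -/
noncomputable def tensorProj [HasColimits C] (K : SSet.{v}) :
    tensorF C K ⟶ 𝟭 (SimplexCategoryᵒᵖ ⥤ C) where
  app X :=
    { app := fun n => Sigma.desc (fun _ => 𝟙 (X.obj n))
      naturality := fun {n m} g => by
        apply Sigma.hom_ext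
        intro s
        simp [tensorF] }
  naturality {X Y} f := by
    ext n : 1
    apply Sigma.hom_ext
    intro s
    simp [tensorF]



/-- The splitting index: `sigmaIdx β p` is the number of elements `j` of the source with
`β j < p`; equivalently `j_β + 1` where `j_β` is the largest index landing in the first block. -/
def sigmaIdx {m n : ℕ} (β : Fin m →o Fin n) (p : ℕ) : ℕ :=
  (Finset.univ.filter fun j : Fin m => ((β j) : ℕ) < p).card

theorem sigmaIdx_le {m n : ℕ} (β : Fin m →o Fin n) (p : ℕ) : sigmaIdx β p ≤ m := by
  classical
  exact le_trans (Finset.card_filter_le _ _) (by simp)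

theorem lt_sigmaIdx_iff {m n : ℕ} (β : Fin m →o Fin n) (p : ℕ) (j : Fin m) :
    (j : ℕ) < sigmaIdx β p ↔ ((β j) : ℕ) < p := by
  classical
  constructor
  · intro h
    by_contra hb
    push_neg at hb
    have hsub : (Finset.univ.filter fun j' : Fin m => ((β j') : ℕ) < p) ⊆ Finset.Iio j := by
      intro x hx
      simp only [Finset.mem_filter, Finset.mem_univ, true_and] at hx
      simp only [Finset.mem_Iio]
      by_contra hxj
      push_neg at hxj
      have hmono := β.monotone hxj
      rw [Fin.le_def] at hmono
      omega
    have hc := Finset.card_le_card hsub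
    rw [Fin.card_Iio] at hc
    exact absurd h (by unfold sigmaIdx; omega)
  · intro h
    have hsub : Finset.Iic j ⊆ (Finset.univ.filter fun j' : Fin m => ((β j') : ℕ) < p) := by
      intro x hx
      simp only [Finset.mem_Iic] at hx
      simp only [Finset.mem_filter, Finset.mem_univ, true_and]
      have hmono := β.monotone hx
      rw [Fin.le_def] at hmono
      omega
    have hc := Finset.card_le_card hsub
    rw [Fin.card_Iic] at hc
    unfold sigmaIdx
    omega

/-- The first component of the splitting of `β` at `p`. -/
def splitFst {m n : ℕ} (β : Fin m →o Fin n) (p : ℕ) : Fin (sigmaIdx β p) →o Fin p where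
  toFun r := ⟨((β ⟨r.val, lt_of_lt_of_le r.2 (sigmaIdx_le β p)⟩) : ℕ),
    (lt_sigmaIdx_iff β p _).mp r.2⟩
  monotone' := by
    intro a b hab
    have h := β.monotone (show (⟨a.val, lt_of_lt_of_le a.2 (sigmaIdx_le β p)⟩ : Fin m) ≤
      ⟨b.val, lt_of_lt_of_le b.2 (sigmaIdx_le β p)⟩ from hab)
    exact h

/-- The second component of the splitting of `β` at `p`. -/
def splitSnd {m n : ℕ} (β : Fin m →o Fin n) (p : ℕ) (hp : p ≤ n) :
    Fin (m - sigmaIdx β p) →o Fin (n - p) where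
  toFun r := ⟨((β ⟨sigmaIdx β p + r.val, by have := r.2; omega⟩) : ℕ) - p, by
    have h1 := (β ⟨sigmaIdx β p + r.val, by have := r.2; omega⟩).2
    have h2 : ¬ ((sigmaIdx β p + r.val) < sigmaIdx β p) := by omega
    have h3 := (lt_sigmaIdx_iff β p ⟨sigmaIdx β p + r.val, by have := r.2; omega⟩).not.mp
      (by simpa using h2)
    simp only [not_lt] at h3
    omega⟩
  monotone' := by
    intro a b hab
    have hav : a.val ≤ b.val := hab
    dsimp only
    simp only [Fin.mk_le_mk]
    apply Nat.sub_le_sub_right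
    exact β.monotone (Fin.mk_le_mk.mpr (by omega))


/-- The functor `J : {−1, 0, …, k} ⥤ ([k] ↓ σₐ)` sending `j` to `(([j], [k−j−1]), id)`.
Here the object `b` of `Δₐ` has `b.len` elements (so `b = [k]` with `k = b.len − 1`), the
discrete category `Fin (b.len + 1)` encodes `{−1, 0, …, k}` via `p = j + 1`, and the comma
category `[k] ↓ σₐ` is `StructuredArrow b ordSumAug`. -/
def Jfun (b : AugSimplex) :
    Discrete (Fin (b.len + 1)) ⥤ StructuredArrow b ordSumAug :=
  Discrete.functor fun p => StructuredArrow.mk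
    (Y := ((⟨p.val⟩ : AugSimplex), (⟨b.len - p.val⟩ : AugSimplex)))
    (eqToHom (by
      apply AugSimplex.ext
      have := p.2
      show b.len = p.val + (b.len - p.val)
      omega))

/-!
A monotone map `γ : [m] → [n₁] ⋆ [n₂]` into an ordinal sum splits in exactly one way as an
ordinal sum `α₁ ⋆ α₂`: the size `q` of the first block of the source is forced to be the number
of points that `γ` sends into the first summand, and `α₁`, `α₂` are then the restrictions of `γ`
to the two blocks. An object of `J ↓ (i₁, i₂, γ)` is precisely such a splitting of `γ`.
-/

section Splitting

variable {m n m' n' n₁ n₂ : ℕ}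

theorem ordJoin_castAdd (f : Fin m →o Fin m') (g : Fin n →o Fin n') (i : Fin m) :
    ordJoin f g (Fin.castAdd n i) = Fin.castAdd n' (f i) :=
  dif_pos i.2

theorem val_ordJoin_lt_iff (f : Fin m →o Fin m') (g : Fin n →o Fin n') (i : Fin (m + n)) :
    (ordJoin f g i : ℕ) < m' ↔ (i : ℕ) < m := by
  show ((dite _ _ _ : Fin (m' + n')) : ℕ) < m' ↔ _
  split_ifs with h
  · simp [h]
  · simp [h]

theorem ordJoin_natAdd (f : Fin m →o Fin m') (g : Fin n →o Fin n') (j : Fin n) :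
    ordJoin f g (Fin.natAdd m j) = Fin.natAdd m' (g j) := by
  show dite _ _ _ = _
  rw [dif_neg (by simp)]
  simp

def splitSndAdd (β : Fin m →o Fin (n₁ + n₂)) : Fin (m - sigmaIdx β n₁) →o Fin n₂ :=
  (Fin.castOrderIso (Nat.add_sub_cancel_left n₁ n₂)).toOrderEmbedding.toOrderHom.comp
    (splitSnd β n₁ (Nat.le_add_right n₁ n₂))

abbrev Splitting (m n₁ n₂ : ℕ) : Type :=
  Σ q : Fin (m + 1), (Fin q →o Fin n₁) × (Fin (m - q) →o Fin n₂)

def IsSplittingOf (γ : Fin m →o Fin (n₁ + n₂)) (t : Splitting m n₁ n₂) : Prop :=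
  ∀ r : Fin m, (ordJoin t.2.1 t.2.2 ⟨r, by have := r.2; have := t.1.2; omega⟩ : ℕ) = γ r

def splitting (γ : Fin m →o Fin (n₁ + n₂)) : Splitting m n₁ n₂ :=
  ⟨⟨sigmaIdx γ n₁, Nat.lt_succ_of_le (sigmaIdx_le γ n₁)⟩, splitFst γ n₁, splitSndAdd γ⟩

theorem isSplittingOf_mk_iff (γ : Fin m →o Fin (n₁ + n₂)) (q : Fin (m + 1))
    (α₁ : Fin q →o Fin n₁) (α₂ : Fin (m - q) →o Fin n₂) :
    IsSplittingOf γ ⟨q, α₁, α₂⟩ ↔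
      (∀ a : Fin q, (α₁ a : ℕ) = γ ⟨a, by omega⟩) ∧
        ∀ j : Fin (m - q), n₁ + α₂ j = γ ⟨q + j, by omega⟩ := by
  have hq := q.2
  constructor
  · intro h
    refine ⟨fun a => ?_, fun j => ?_⟩
    · exact (congrArg Fin.val (ordJoin_castAdd α₁ α₂ a)).symm.trans (h ⟨a, by omega⟩)
    · exact (congrArg Fin.val (ordJoin_natAdd α₁ α₂ j)).symm.trans (h ⟨q + j, by omega⟩)
  · rintro ⟨h₁, h₂⟩ r
    rcases lt_or_ge (r : ℕ) q with hr | hr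
    · exact (congrArg Fin.val (ordJoin_castAdd α₁ α₂ ⟨r, hr⟩)).trans (h₁ ⟨r, hr⟩)
    · have hcast : (⟨r, by omega⟩ : Fin (q + (m - q))) = Fin.natAdd q ⟨r - q, by omega⟩ :=
        Fin.ext (by simp; omega)
      rw [hcast, ordJoin_natAdd, Fin.val_natAdd, h₂]
      congr 2
      ext
      dsimp only
      omega

theorem isSplittingOf_splitting (γ : Fin m →o Fin (n₁ + n₂)) :
    IsSplittingOf γ (splitting γ) := by
  refine (isSplittingOf_mk_iff γ _ _ _).2 ⟨fun a => rfl, fun j => ?_⟩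
  have hj : sigmaIdx γ n₁ + j < m := Nat.add_lt_of_lt_sub' j.2
  have hle := (lt_sigmaIdx_iff γ n₁ ⟨_, hj⟩).not.1 (by simp)
  show n₁ + ((γ ⟨sigmaIdx γ n₁ + j, hj⟩ : ℕ) - n₁) = γ ⟨sigmaIdx γ n₁ + j, hj⟩
  omega

theorem eq_sigmaIdx_of_forall_lt_iff {n : ℕ} (β : Fin m →o Fin n) (p q : ℕ) (hq : q ≤ m)
    (h : ∀ r : Fin m, (r : ℕ) < q ↔ (β r : ℕ) < p) : q = sigmaIdx β p := by
  have hs := sigmaIdx_le β p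
  refine eq_of_forall_lt_iff fun r => ?_
  by_cases hr : r < m
  · exact (h ⟨r, hr⟩).trans (lt_sigmaIdx_iff β p ⟨r, hr⟩).symm
  · omega

theorem IsSplittingOf.eq_splitting {γ : Fin m →o Fin (n₁ + n₂)} {t : Splitting m n₁ n₂}
    (ht : IsSplittingOf γ t) : t = splitting γ := by
  obtain ⟨q, α₁, α₂⟩ := t
  have hq : q = (splitting γ).1 := Fin.ext <|
    eq_sigmaIdx_of_forall_lt_iff γ n₁ q (Nat.le_of_lt_succ q.2) fun r => by
      rw [← ht r, val_ordJoin_lt_iff]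
  subst hq
  obtain ⟨h₁, h₂⟩ := (isSplittingOf_mk_iff γ _ α₁ α₂).1 ht
  have e₁ : α₁ = splitFst γ n₁ := by
    ext a
    exact h₁ a
  have e₂ : α₂ = splitSndAdd γ := by
    ext j
    have hj : sigmaIdx γ n₁ + j < m := Nat.add_lt_of_lt_sub' j.2
    have h := h₂ j
    change n₁ + (α₂ j : ℕ) = γ ⟨sigmaIdx γ n₁ + j, hj⟩ at h
    change (α₂ j : ℕ) = (γ ⟨sigmaIdx γ n₁ + j, hj⟩ : ℕ) - n₁
    omega
  rw [e₁, e₂]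
  rfl

theorem existsUnique_isSplittingOf (γ : Fin m →o Fin (n₁ + n₂)) :
    ∃! t, IsSplittingOf γ t :=
  ⟨splitting γ, isSplittingOf_splitting γ, fun _ ht => ht.eq_splitting⟩

end Splitting

section Comma

variable {b : AugSimplex} {c : StructuredArrow b ordSumAug}

theorem val_eqToHom_apply {a a' : AugSimplex} (e : a = a') (x : Fin a.len) :
    ((show Fin a.len →o Fin a'.len from eqToHom e) x : ℕ) = x := by
  subst e
  rfl

theorem jfun_obj_hom_comp_map_eq_iff (q : Fin (b.len + 1))
    (α : ((⟨q⟩ : AugSimplex), (⟨b.len - q⟩ : AugSimplex)) ⟶ c.right) :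
    ((Jfun b).obj ⟨q⟩).hom ≫ ordSumAug.map α = c.hom ↔ IsSplittingOf c.hom ⟨q, α.1, α.2⟩ := by
  have hval (r : Fin b.len) :
      ((show Fin b.len →o Fin (c.right.1.len + c.right.2.len) from
          ((Jfun b).obj ⟨q⟩).hom ≫ ordSumAug.map α) r : ℕ) =
        (ordJoin α.1 α.2 ⟨r, show (r : ℕ) < q + (b.len - q) by omega⟩ : ℕ) :=
    congrArg (fun i => (ordJoin α.1 α.2 i : ℕ)) <| Fin.ext <|
      val_eqToHom_apply (AugSimplex.ext (show b.len = q + (b.len - q) by omega)) r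
  constructor
  · intro h r
    rw [← h]
    exact (hval r).symm
  · intro h
    exact OrderHom.ext _ _ (funext fun r => Fin.ext ((hval r).trans (h r)))

def toSplitting (X : CostructuredArrow (Jfun b) c) :
    Splitting b.len c.right.1.len c.right.2.len :=
  ⟨X.left.as, X.hom.right.1, X.hom.right.2⟩

theorem isSplittingOf_toSplitting (X : CostructuredArrow (Jfun b) c) :
    IsSplittingOf c.hom (toSplitting X) :=
  (jfun_obj_hom_comp_map_eq_iff X.left.as X.hom.right).1 (StructuredArrow.w X.hom)

theorem toSplitting_injective : Function.Injective (toSplitting (c := c)) := by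
  rintro ⟨⟨q⟩, ⟨⟨⟩⟩, f⟩ ⟨⟨q'⟩, ⟨⟨⟩⟩, f'⟩ h
  obtain ⟨rfl, h⟩ := Sigma.mk.inj_iff.mp h
  obtain rfl : f = f' := StructuredArrow.ext _ _ (eq_of_heq h)
  rfl

def ofSplitting (t : Splitting b.len c.right.1.len c.right.2.len) (ht : IsSplittingOf c.hom t) :
    CostructuredArrow (Jfun b) c :=
  CostructuredArrow.mk (Y := ⟨t.1⟩)
    (StructuredArrow.homMk (f := (Jfun b).obj ⟨t.1⟩) (t.2.1, t.2.2)
      ((jfun_obj_hom_comp_map_eq_iff t.1 (t.2.1, t.2.2)).2 ht))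

end Comma

theorem nonempty_unique_costructuredArrow_jfun (b : AugSimplex)
    (c : StructuredArrow b ordSumAug) : Nonempty (Unique (CostructuredArrow (Jfun b) c)) := by
  obtain ⟨t, ht, ht_unique⟩ := existsUnique_isSplittingOf (n₁ := c.right.1.len) c.hom
  exact ⟨{ default := ofSplitting t ht
           uniq := fun X => toSplitting_injective (ht_unique _ (isSplittingOf_toSplitting X)) }⟩

/-- **(From the proof of Lemma 2.13.)**
For every `k ≥ −1` (every object `b` of `Δₐ`) and every object `c = (i₁, i₂, γ)` of the comma
category `[k] ↓ σₐ`, the comma category `J ↓ c` has exactly one object.  Concretely, there is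
a unique `−1 ≤ j ≤ k` (encoded by `q = j+1 : Fin (b.len + 1)`) and a unique pair of morphisms
`(α₁ : [j] → [i₁], α₂ : [k−j−1] → [i₂])` in `Δₐ × Δₐ` with `σₐ(α₁, α₂) = γ`. -/
theorem comma_under_discrete_has_one_object
    (b : AugSimplex) (c : StructuredArrow b ordSumAug) :
    Nonempty (Unique (CostructuredArrow (Jfun b) c)) ∧
    (∃! t : Σ q : Fin (b.len + 1),
        ((⟨q.val⟩ : AugSimplex) ⟶ c.right.1) × ((⟨b.len - q.val⟩ : AugSimplex) ⟶ c.right.2),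
      ∀ r : Fin b.len,
        ((ordJoin t.2.1 t.2.2) ⟨r.val, by
          have := r.2
          have := t.1.2
          show r.val < t.1.val + (b.len - t.1.val)
          omega⟩ : ℕ) =
          ((show Fin b.len →o Fin (c.right.1.len + c.right.2.len) from c.hom) r : ℕ)) :=
  ⟨nonempty_unique_costructuredArrow_jfun b c, existsUnique_isSplittingOf _⟩

end OrdSum
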